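/- Let r : ℝ → ℝ be twice continuously differentiable with 0 < r(t) < 1 for all t ∈ ℝ, let F(s,t) = (√(1 − r(t)²) cos s, √(1 − r(t)²) sin s, r(t) cos t, r(t) sin t) ∈ ℝ⁴, and let ν(s,t) = [ r(t)²√(1 − r(t)²)·(cos s, sin s, 0, 0) − r(t)(1 − r(t)²)·(0, 0, cos t, sin t) − r'(t)·(0, 0, sin t, −cos t) ] / √(r'(t)² + r(t)²(1 − r(t)²)). Then for all (s,t) ∈ ℝ²: ⟨∂ν/∂s, ∂F/∂s⟩ = r(t)²(1 − r(t)²)/√(r'(t)² + r(t)²(1 − r(t)²)) and ⟨∂ν/∂t, ∂F/∂t⟩ = [ r(t)(1 − r(t)²) r''(t) − (2 − 3 r(t)²) r'(t)² − r(t)²(1 − r(t)²)² ] / [ (1 − r(t)²) √(r'(t)² + r(t)²(1 − r(t)²)) ], where ∂/∂s and ∂/∂t denote the derivatives of the maps s ↦ F(s,t), s ↦ ν(s,t) and t ↦ F(s,t), t ↦ ν(s,t) respectively. -/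

import Mathlib

/-!
Write `ν = (r'² + r²(1 - r²))^(-1/2) • N` with `N` the unnormalised normal `rotNormal r r'`.
Since `N ⟂ ∂F/∂t`, the derivative of the normalising factor drops out of `⟪∂ν/∂t, ∂F/∂t⟫`, so
both components reduce to `⟪∂N, ∂F⟫`, a coordinate computation using only `cos² + sin² = 1` and,
for `p = √(1 - r²)`, the relations `p² = 1 - r²` and `p' = -r r' / p`.
-/

open Real
open scoped RealInnerProductSpace

theorem hasDerivAt_euclideanSpace_vec4 {f₀ f₁ f₂ f₃ : ℝ → ℝ} {a₀ a₁ a₂ a₃ x : ℝ}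
    (h₀ : HasDerivAt f₀ a₀ x) (h₁ : HasDerivAt f₁ a₁ x) (h₂ : HasDerivAt f₂ a₂ x)
    (h₃ : HasDerivAt f₃ a₃ x) :
    HasDerivAt (fun y => !₂[f₀ y, f₁ y, f₂ y, f₃ y]) !₂[a₀, a₁, a₂, a₃] x := by
  have h : HasDerivAt (fun y => ![f₀ y, f₁ y, f₂ y, f₃ y]) ![a₀, a₁, a₂, a₃] x := by
    rw [hasDerivAt_pi]
    intro i
    fin_cases i <;> assumption
  exact (PiLp.hasFDerivAt_toLp 2 _).comp_hasDerivAt x h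

theorem inner_euclideanSpace_vec4 (a₀ a₁ a₂ a₃ b₀ b₁ b₂ b₃ : ℝ) :
    ⟪!₂[a₀, a₁, a₂, a₃], !₂[b₀, b₁, b₂, b₃]⟫ = a₀ * b₀ + a₁ * b₁ + a₂ * b₂ + a₃ * b₃ := by
  simp only [PiLp.inner_apply, Fin.sum_univ_four]
  simp [mul_comm]

theorem inner_deriv_smul_of_inner_eq_zero {E : Type*} [NormedAddCommGroup E]
    [InnerProductSpace ℝ E] {φ : ℝ → ℝ} {N : ℝ → E} {X : E} {t : ℝ}
    (hφ : DifferentiableAt ℝ φ t) (hN : DifferentiableAt ℝ N t) (hX : ⟪N t, X⟫ = 0) :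
    ⟪deriv (fun t => φ t • N t) t, X⟫ = φ t * ⟪deriv N t, X⟫ := by
  rw [(hφ.hasDerivAt.fun_smul hN.hasDerivAt).deriv, inner_add_left, real_inner_smul_left,
    real_inner_smul_left, hX, mul_zero, add_zero]

noncomputable def rotImmersion (r : ℝ → ℝ) (s t : ℝ) : EuclideanSpace ℝ (Fin 4) :=
  !₂[√(1 - r t ^ 2) * cos s, √(1 - r t ^ 2) * sin s, r t * cos t, r t * sin t]

/-- `r'` stands for the derivative of `r`. -/
noncomputable def rotNormal (r r' : ℝ → ℝ) (s t : ℝ) : EuclideanSpace ℝ (Fin 4) :=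
  !₂[r t ^ 2 * √(1 - r t ^ 2) * cos s, r t ^ 2 * √(1 - r t ^ 2) * sin s,
    -(r t * (1 - r t ^ 2) * cos t + r' t * sin t), r' t * cos t - r t * (1 - r t ^ 2) * sin t]

theorem rotNormal_eq_sub (r r' : ℝ → ℝ) (s t : ℝ) :
    rotNormal r r' s t = (r t ^ 2 * √(1 - r t ^ 2)) • !₂[cos s, sin s, 0, 0]
      - (r t * (1 - r t ^ 2)) • !₂[0, 0, cos t, sin t] - r' t • !₂[0, 0, sin t, -cos t] := by
  ext i
  fin_cases i <;> simp [rotNormal] <;> ring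

theorem hasDerivAt_rotImmersion_fst (r : ℝ → ℝ) (s t : ℝ) :
    HasDerivAt (rotImmersion r · t)
      !₂[√(1 - r t ^ 2) * -sin s, √(1 - r t ^ 2) * cos s, 0, 0] s :=
  hasDerivAt_euclideanSpace_vec4 ((hasDerivAt_cos s).const_mul _)
    ((hasDerivAt_sin s).const_mul _) (hasDerivAt_const _ _) (hasDerivAt_const _ _)

theorem hasDerivAt_rotNormal_fst (r r' : ℝ → ℝ) (s t : ℝ) :
    HasDerivAt (rotNormal r r' · t)
      !₂[r t ^ 2 * √(1 - r t ^ 2) * -sin s, r t ^ 2 * √(1 - r t ^ 2) * cos s, 0, 0] s :=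
  hasDerivAt_euclideanSpace_vec4 ((hasDerivAt_cos s).const_mul _)
    ((hasDerivAt_sin s).const_mul _) (hasDerivAt_const _ _) (hasDerivAt_const _ _)

theorem inner_deriv_rotNormal_deriv_rotImmersion_fst (r r' : ℝ → ℝ) (s t : ℝ)
    (h : r t ^ 2 ≤ 1) :
    ⟪deriv (rotNormal r r' · t) s, deriv (rotImmersion r · t) s⟫ = r t ^ 2 * (1 - r t ^ 2) := by
  rw [(hasDerivAt_rotNormal_fst r r' s t).deriv, (hasDerivAt_rotImmersion_fst r s t).deriv,
    inner_euclideanSpace_vec4]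
  linear_combination (r t ^ 2 * √(1 - r t ^ 2) ^ 2) * sin_sq_add_cos_sq s
    + r t ^ 2 * sq_sqrt (sub_nonneg.2 h)

section

variable {r r' : ℝ → ℝ} {r₁ r₂ t : ℝ} (s : ℝ)

theorem HasDerivAt.sqrt_one_sub_sq (hr : HasDerivAt r r₁ t) (h : r t ^ 2 < 1) :
    HasDerivAt (fun t => √(1 - r t ^ 2)) (-(r t * r₁) / √(1 - r t ^ 2)) t := by
  convert ((hr.fun_pow 2).const_sub 1).sqrt (sub_pos.2 h).ne' using 1
  push_cast
  field_simp

theorem hasDerivAt_rotImmersion_snd (hr : HasDerivAt r r₁ t) (h : r t ^ 2 < 1) :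
    HasDerivAt (rotImmersion r s ·)
      !₂[-(r t * r₁) / √(1 - r t ^ 2) * cos s, -(r t * r₁) / √(1 - r t ^ 2) * sin s,
        r₁ * cos t + r t * -sin t, r₁ * sin t + r t * cos t] t :=
  hasDerivAt_euclideanSpace_vec4 ((hr.sqrt_one_sub_sq h).mul_const _)
    ((hr.sqrt_one_sub_sq h).mul_const _) (hr.mul (hasDerivAt_cos t)) (hr.mul (hasDerivAt_sin t))

theorem hasDerivAt_rotNormal_snd (hr : HasDerivAt r (r' t) t) (hr' : HasDerivAt r' r₂ t)
    (h : r t ^ 2 < 1) :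
    HasDerivAt (rotNormal r r' s ·)
      !₂[(2 * r t * r' t * √(1 - r t ^ 2) + r t ^ 2 * (-(r t * r' t) / √(1 - r t ^ 2))) * cos s,
        (2 * r t * r' t * √(1 - r t ^ 2) + r t ^ 2 * (-(r t * r' t) / √(1 - r t ^ 2))) * sin s,
        -((r' t * (1 - r t ^ 2) + r t * -(2 * r t * r' t)) * cos t + r t * (1 - r t ^ 2) * -sin t
          + (r₂ * sin t + r' t * cos t)),
        r₂ * cos t + r' t * -sin t
          - ((r' t * (1 - r t ^ 2) + r t * -(2 * r t * r' t)) * sin t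
            + r t * (1 - r t ^ 2) * cos t)] t := by
  have hsq : HasDerivAt (fun t => 1 - r t ^ 2) (-(2 * r t * r' t)) t :=
    ((hr.fun_pow 2).const_sub 1).congr_deriv (by push_cast; ring)
  have hcoef := ((hr.fun_pow 2).fun_mul (hr.sqrt_one_sub_sq h)).congr_deriv
    (show _ = 2 * r t * r' t * √(1 - r t ^ 2) + r t ^ 2 * (-(r t * r' t) / √(1 - r t ^ 2)) by
      push_cast; ring)
  have hrad := hr.fun_mul hsq
  refine hasDerivAt_euclideanSpace_vec4 ?_ ?_ ?_ ?_
  · exact hcoef.mul_const (cos s)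
  · exact hcoef.mul_const (sin s)
  · exact ((hrad.mul (hasDerivAt_cos t)).add (hr'.mul (hasDerivAt_sin t))).neg
  · exact (hr'.mul (hasDerivAt_cos t)).sub (hrad.mul (hasDerivAt_sin t))

theorem inner_rotNormal_deriv_rotImmersion_snd (hr : HasDerivAt r (r' t) t) (h : r t ^ 2 < 1) :
    ⟪rotNormal r r' s t, deriv (rotImmersion r s ·) t⟫ = 0 := by
  rw [(hasDerivAt_rotImmersion_snd s hr h).deriv, rotNormal, inner_euclideanSpace_vec4]
  have hp : √(1 - r t ^ 2) ≠ 0 := (sqrt_pos.2 (sub_pos.2 h)).ne'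
  field_simp
  grind [sin_sq_add_cos_sq]

theorem inner_deriv_rotNormal_deriv_rotImmersion_snd (hr : HasDerivAt r (r' t) t)
    (hr' : HasDerivAt r' r₂ t) (h : r t ^ 2 < 1) :
    ⟪deriv (rotNormal r r' s ·) t, deriv (rotImmersion r s ·) t⟫
      = (r t * (1 - r t ^ 2) * r₂ - (2 - 3 * r t ^ 2) * r' t ^ 2 - r t ^ 2 * (1 - r t ^ 2) ^ 2)
        / (1 - r t ^ 2) := by
  rw [(hasDerivAt_rotNormal_snd s hr hr' h).deriv, (hasDerivAt_rotImmersion_snd s hr h).deriv,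
    inner_euclideanSpace_vec4]
  have hp : √(1 - r t ^ 2) ≠ 0 := (sqrt_pos.2 (sub_pos.2 h)).ne'
  have hq : 1 - r t ^ 2 ≠ 0 := (sub_pos.2 h).ne'
  have hp2 := sq_sqrt (sub_pos.2 h).le
  field_simp
  grind [sin_sq_add_cos_sq]

end

/-- The diagonal components of the second fundamental form of the rotationally
symmetric immersion `F` with unit normal `ν`. -/
theorem second_fundamental_form_of_rotational_immersion
    (r : ℝ → ℝ) (hr : ContDiff ℝ 2 r) (hr01 : ∀ t : ℝ, 0 < r t ∧ r t < 1)
    (F ν : ℝ → ℝ → EuclideanSpace ℝ (Fin 4))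
    (hF : ∀ s t : ℝ, F s t = (WithLp.equiv 2 (Fin 4 → ℝ)).symm
      ![Real.sqrt (1 - r t ^ 2) * Real.cos s,
        Real.sqrt (1 - r t ^ 2) * Real.sin s,
        r t * Real.cos t,
        r t * Real.sin t])
    (hν : ∀ s t : ℝ, ν s t =
      (Real.sqrt ((deriv r t) ^ 2 + r t ^ 2 * (1 - r t ^ 2)))⁻¹ •
        ((r t ^ 2 * Real.sqrt (1 - r t ^ 2)) •
            (WithLp.equiv 2 (Fin 4 → ℝ)).symm ![Real.cos s, Real.sin s, 0, 0]
          - (r t * (1 - r t ^ 2)) •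
            (WithLp.equiv 2 (Fin 4 → ℝ)).symm ![0, 0, Real.cos t, Real.sin t]
          - deriv r t •
            (WithLp.equiv 2 (Fin 4 → ℝ)).symm ![0, 0, Real.sin t, -Real.cos t])) :
    ∀ s t : ℝ,
      ⟪deriv (fun s' => ν s' t) s, deriv (fun s' => F s' t) s⟫
        = r t ^ 2 * (1 - r t ^ 2)
          / Real.sqrt ((deriv r t) ^ 2 + r t ^ 2 * (1 - r t ^ 2)) ∧
      ⟪deriv (fun t' => ν s t') t, deriv (fun t' => F s t') t⟫
        = (r t * (1 - r t ^ 2) * deriv (deriv r) t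
            - (2 - 3 * r t ^ 2) * (deriv r t) ^ 2
            - r t ^ 2 * (1 - r t ^ 2) ^ 2)
          / ((1 - r t ^ 2)
            * Real.sqrt ((deriv r t) ^ 2 + r t ^ 2 * (1 - r t ^ 2))) := by
  intro s t
  obtain ⟨hr0, hr1⟩ := hr01 t
  have hlt : r t ^ 2 < 1 := by nlinarith
  have hD : 0 < deriv r t ^ 2 + r t ^ 2 * (1 - r t ^ 2) :=
    add_pos_of_nonneg_of_pos (sq_nonneg _) (mul_pos (by positivity) (sub_pos.2 hlt))
  have hr₁ : Differentiable ℝ r := hr.differentiable (by norm_num)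
  have hr₂ : Differentiable ℝ (deriv r) :=
    iteratedDeriv_one (f := r) ▸ hr.differentiable_iteratedDeriv 1 (by norm_num)
  have hφ : DifferentiableAt ℝ (fun t => (√(deriv r t ^ 2 + r t ^ 2 * (1 - r t ^ 2)))⁻¹) t := by
    have := hr₂ t
    have := hD.ne'
    have := (sqrt_pos.2 hD).ne'
    fun_prop (disch := assumption)
  have hνN : ∀ s t, ν s t
      = (√(deriv r t ^ 2 + r t ^ 2 * (1 - r t ^ 2)))⁻¹ • rotNormal r (deriv r) s t := by
    intro s t
    rw [hν, rotNormal_eq_sub]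
    rfl
  have hFR : ∀ s t, F s t = rotImmersion r s t := hF
  have hdr : HasDerivAt r (deriv r t) t := (hr₁ t).hasDerivAt
  have hdr' : HasDerivAt (deriv r) (deriv (deriv r) t) t := (hr₂ t).hasDerivAt
  simp only [hνN, hFR]
  constructor
  · rw [deriv_fun_const_smul_field, real_inner_smul_left,
      inner_deriv_rotNormal_deriv_rotImmersion_fst r _ s t hlt.le, inv_mul_eq_div]
  · rw [inner_deriv_smul_of_inner_eq_zero hφ
      (hasDerivAt_rotNormal_snd s hdr hdr' hlt).differentiableAt
      (inner_rotNormal_deriv_rotImmersion_snd s hdr hlt),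
      inner_deriv_rotNormal_deriv_rotImmersion_snd s hdr hdr' hlt]
    field_simp
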